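/- arXiv:1505.06892 — 2 statements merged into one kernel-verified Lean document; each statement's English description precedes it below -/
import Mathlib

section
/- Let V be a real inner product space of dimension 2m, J : V → V with J² = −id compatible with the inner product, and A : V → V self-adjoint positive commuting with J with all eigenvalues ≤ c for some c > 0. Then det(A)^{1/2} · ‖A^{-1}‖ ≤ c^{m-1}, where ‖A^{-1}‖ is the operator norm of A^{-1}. -/
/-!
Let `λ_min` be the smallest eigenvalue of `A`. Since `A` commutes with `J`, every eigenspace of `A`
is `J`-invariant, and a real space carrying `J² = -1` has even dimension (`det J ² = (-1)^dim`);
so `λ_min` occurs at least twice. Hence `det A ≤ λ_min² c^(2m-2)`, while `‖A⁻¹‖ ≤ 1/λ_min`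
because `‖A v‖ ≥ λ_min ‖v‖` in an orthonormal eigenbasis.
-/

open RealInnerProductSpace

theorem LinearMap.even_finrank_of_comp_self_eq_neg_id {K W : Type*} [Field K] [LinearOrder K]
    [IsStrictOrderedRing K] [AddCommGroup W] [Module K W] [FiniteDimensional K W]
    {J : W →ₗ[K] W} (hJ : J ∘ₗ J = -LinearMap.id) : Even (Module.finrank K W) := by
  have hdet : LinearMap.det J ^ 2 = (-1) ^ Module.finrank K W := by
    rw [sq, ← LinearMap.det_comp, hJ, ← neg_one_smul K LinearMap.id, LinearMap.det_smul,
      LinearMap.det_id, mul_one]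
  by_contra hodd
  have := sq_nonneg (LinearMap.det J)
  rw [hdet, (Nat.not_even_iff_odd.mp hodd).neg_one_pow] at this
  norm_num at this

theorem Module.End.even_finrank_eigenspace_of_commute {K W : Type*} [Field K] [LinearOrder K]
    [IsStrictOrderedRing K] [AddCommGroup W] [Module K W] [FiniteDimensional K W]
    {A J : Module.End K W} (hJ : J ∘ₗ J = -LinearMap.id) (hAJ : Commute A J) (μ : K) :
    Even (Module.finrank K (A.eigenspace μ)) := by
  refine LinearMap.even_finrank_of_comp_self_eq_neg_id
    (J := J.restrict (A.mapsTo_genEigenspace_of_comm hAJ μ 1)) ?_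
  ext v
  exact congr($hJ v)

theorem LinearMap.IsSymmetric.exists_ne_eigenvalues_eq_of_commute {E : Type*}
    [NormedAddCommGroup E] [InnerProductSpace ℝ E] [FiniteDimensional ℝ E] {T J : E →ₗ[ℝ] E}
    (hT : T.IsSymmetric) {n : ℕ} (hn : Module.finrank ℝ E = n) (hJ : J ∘ₗ J = -LinearMap.id)
    (hTJ : Commute T J) (i : Fin n) :
    ∃ j ≠ i, hT.eigenvalues hn j = hT.eigenvalues hn i := by
  set s : Finset (Fin n) := {j | hT.eigenvalues hn j = hT.eigenvalues hn i}
  have hi : i ∈ s := by simp [s]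
  have heven : Even s.card := by
    have := Module.End.even_finrank_eigenspace_of_commute hJ hTJ (hT.eigenvalues hn i)
    rwa [← hT.card_filter_eigenvalues_eq hn] at this
  have htwo : 1 < s.card := by
    obtain ⟨r, hr⟩ := heven
    have := Finset.card_pos.mpr ⟨i, hi⟩
    omega
  obtain ⟨j, hj, hji⟩ := Finset.exists_mem_ne htwo i
  exact ⟨j, hji, by simpa [s] using hj⟩

theorem LinearMap.IsSymmetric.eigenvalues_pos {E : Type*} [NormedAddCommGroup E]
    [InnerProductSpace ℝ E] [FiniteDimensional ℝ E] {T : E →ₗ[ℝ] E} (hT : T.IsSymmetric) {n : ℕ}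
    (hn : Module.finrank ℝ E = n) (hpos : ∀ v, v ≠ 0 → 0 < ⟪T v, v⟫) (i : Fin n) :
    0 < hT.eigenvalues hn i := by
  have hv := hT.hasEigenvector_eigenvectorBasis hn i
  have := hpos _ hv.2
  rw [hv.apply_eq_smul, real_inner_smul_left, real_inner_self_eq_norm_sq] at this
  exact pos_of_mul_pos_left this (sq_nonneg _)

theorem LinearMap.IsSymmetric.mul_norm_le_norm_apply {𝕜 E : Type*} [RCLike 𝕜]
    [NormedAddCommGroup E] [InnerProductSpace 𝕜 E] [FiniteDimensional 𝕜 E] {T : E →ₗ[𝕜] E}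
    (hT : T.IsSymmetric) {n : ℕ} (hn : Module.finrank 𝕜 E = n) {μ : ℝ} (hμ : 0 ≤ μ)
    (hle : ∀ i, μ ≤ hT.eigenvalues hn i) (v : E) : μ * ‖v‖ ≤ ‖T v‖ := by
  set b := hT.eigenvectorBasis hn
  rw [← b.repr.norm_map v, ← b.repr.norm_map (T v),
    ← pow_le_pow_iff_left₀ (by positivity) (norm_nonneg _) two_ne_zero, mul_pow,
    EuclideanSpace.norm_sq_eq, EuclideanSpace.norm_sq_eq, Finset.mul_sum]
  refine Finset.sum_le_sum fun i _ => ?_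
  rw [hT.eigenvectorBasis_apply_self_apply hn v i, norm_mul, mul_pow, RCLike.norm_ofReal, sq_abs]
  gcongr
  exact hle i

theorem ContinuousLinearMap.opNorm_le_inv_of_mul_norm_le {𝕜 E F : Type*}
    [NontriviallyNormedField 𝕜] [SeminormedAddCommGroup E] [SeminormedAddCommGroup F]
    [NormedSpace 𝕜 E] [NormedSpace 𝕜 F] {A : F → E} {B : E →L[𝕜] F} {μ : ℝ} (hμ : 0 < μ)
    (hA : ∀ u, μ * ‖u‖ ≤ ‖A u‖) (hAB : ∀ v, A (B v) = v) : ‖B‖ ≤ μ⁻¹ :=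
  B.opNorm_le_bound (inv_nonneg.mpr hμ.le) fun v => by
    rw [inv_mul_eq_div, le_div_iff₀' hμ]
    simpa only [hAB] using hA (B v)

theorem Finset.prod_le_mul_mul_pow_card_sub_two {ι R : Type*} [Fintype ι] [CommSemiring R]
    [PartialOrder R] [IsOrderedRing R] {f : ι → R} {c : R} (h0 : ∀ k, 0 ≤ f k)
    (hc : ∀ k, f k ≤ c) {i j : ι} (hij : i ≠ j) :
    ∏ k, f k ≤ f i * f j * c ^ (Fintype.card ι - 2) := by
  classical
  have hj : j ∈ univ.erase i := mem_erase.mpr ⟨hij.symm, mem_univ j⟩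
  rw [← mul_prod_erase univ f (mem_univ i), ← mul_prod_erase _ f hj, ← mul_assoc]
  refine mul_le_mul_of_nonneg_left ?_ (mul_nonneg (h0 i) (h0 j))
  calc ∏ k ∈ (univ.erase i).erase j, f k ≤ ∏ _k ∈ (univ.erase i).erase j, c :=
        prod_le_prod (fun k _ => h0 k) fun k _ => hc k
    _ = c ^ (Fintype.card ι - 2) := by
        rw [prod_const, card_erase_of_mem hj, card_erase_of_mem (mem_univ i), card_univ,
          Nat.sub_sub]

theorem Real.sqrt_prod_le_mul_pow_of_card_eq_two_mul {ι : Type*} [Fintype ι] {m : ℕ}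
    (hcard : Fintype.card ι = 2 * m) {f : ι → ℝ} {c : ℝ} (h0 : ∀ k, 0 ≤ f k)
    (hc : ∀ k, f k ≤ c) {i j : ι} (hij : i ≠ j) (heq : f j = f i) :
    √(∏ k, f k) ≤ f i * c ^ (m - 1) := by
  have hprod := Finset.prod_le_mul_mul_pow_card_sub_two h0 hc hij
  rw [heq, hcard, show 2 * m - 2 = (m - 1) * 2 by omega, pow_mul, ← sq, ← mul_pow] at hprod
  exact (Real.sqrt_le_left (mul_nonneg (h0 i) (pow_nonneg ((h0 i).trans (hc i)) _))).mpr hprod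

theorem stmt9_general {V : Type*} [NormedAddCommGroup V] [InnerProductSpace ℝ V]
    [FiniteDimensional ℝ V]
    (m : ℕ) (hm : 1 ≤ m) (hdim : Module.finrank ℝ V = 2 * m)
    (J : V →ₗ[ℝ] V) (hJ : J ∘ₗ J = -LinearMap.id)
    (A B : V →L[ℝ] V)
    (hA : ∀ v w : V, ⟪A v, w⟫ = ⟪v, A w⟫)
    (hpos : ∀ v : V, v ≠ 0 → 0 < ⟪A v, v⟫)
    (hcomm : ∀ v : V, A (J v) = J (A v))
    (c : ℝ)
    (heig : ∀ (lam : ℝ) (v : V), v ≠ 0 → A v = lam • v → lam ≤ c)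
    (hB : ∀ v : V, A (B v) = v ∧ B (A v) = v) :
    Real.sqrt (LinearMap.det (A : V →ₗ[ℝ] V)) * ‖B‖ ≤ c ^ (m - 1) := by
  have hT : (A : V →ₗ[ℝ] V).IsSymmetric := hA
  set lam := hT.eigenvalues hdim
  have hlam_pos : ∀ i, 0 < lam i := hT.eigenvalues_pos hdim hpos
  have hlam_le : ∀ i, lam i ≤ c := fun i =>
    heig _ _ (hT.hasEigenvector_eigenvectorBasis hdim i).2 (hT.apply_eigenvectorBasis hdim i)
  have : Nonempty (Fin (2 * m)) := ⟨⟨0, by omega⟩⟩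
  obtain ⟨i₀, hmin⟩ := Finite.exists_min lam
  obtain ⟨j₀, hj₀, hj₀_eq⟩ :=
    hT.exists_ne_eigenvalues_eq_of_commute hdim hJ (LinearMap.ext hcomm) i₀
  have hsqrt_det : √(LinearMap.det (A : V →ₗ[ℝ] V)) ≤ lam i₀ * c ^ (m - 1) := by
    rw [hT.det_eq_prod_eigenvalues hdim]
    exact Real.sqrt_prod_le_mul_pow_of_card_eq_two_mul (Fintype.card_fin _)
      (fun i => (hlam_pos i).le) hlam_le hj₀.symm hj₀_eq
  have hB_norm : ‖B‖ ≤ (lam i₀)⁻¹ :=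
    ContinuousLinearMap.opNorm_le_inv_of_mul_norm_le (hlam_pos i₀)
      (hT.mul_norm_le_norm_apply hdim (hlam_pos i₀).le hmin) fun v => (hB v).1
  calc √(LinearMap.det (A : V →ₗ[ℝ] V)) * ‖B‖ ≤ lam i₀ * c ^ (m - 1) * (lam i₀)⁻¹ :=
        mul_le_mul hsqrt_det hB_norm (norm_nonneg _) ((Real.sqrt_nonneg _).trans hsqrt_det)
    _ = c ^ (m - 1) := by field_simp [(hlam_pos i₀).ne']

/-- On a `2m`-dimensional real inner product space, if `J² = -id` is compatible
with the inner product and `A` is a positive self-adjoint operator commuting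
with `J` whose eigenvalues are all `≤ c`, then `det(A)^{1/2}·‖A⁻¹‖ ≤ c^{m-1}`. -/
theorem stmt9 {V : Type*} [NormedAddCommGroup V] [InnerProductSpace ℝ V]
    [FiniteDimensional ℝ V]
    (m : ℕ) (hm : 1 ≤ m) (hdim : Module.finrank ℝ V = 2 * m)
    (J : V →ₗ[ℝ] V) (hJ : J ∘ₗ J = -LinearMap.id)
    (hJiso : ∀ v w : V, ⟪J v, J w⟫ = ⟪v, w⟫)
    (A B : V →L[ℝ] V)
    (hA : ∀ v w : V, ⟪A v, w⟫ = ⟪v, A w⟫)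
    (hpos : ∀ v : V, v ≠ 0 → 0 < ⟪A v, v⟫)
    (hcomm : ∀ v : V, A (J v) = J (A v))
    (c : ℝ) (hc : 0 < c)
    (heig : ∀ (lam : ℝ) (v : V), v ≠ 0 → A v = lam • v → lam ≤ c)
    (hB : ∀ v : V, A (B v) = v ∧ B (A v) = v) :
    Real.sqrt (LinearMap.det (A : V →ₗ[ℝ] V)) * ‖B‖ ≤ c ^ (m - 1) :=
  stmt9_general m hm hdim J hJ A B hA hpos hcomm c heig hB
end

section
/- Let (M,g) be a Riemannian manifold with μ_g(M) < ∞, and suppose the constant function 1 lies in W^{1,2}_0(M,g) (the closure of C^∞_c(M) in the Sobolev W^{1,2}-norm). Then (M,g) is 2-parabolic: there is a sequence φ_n ∈ Lip_c(M) with 0 ≤ φ_n ≤ 1, φ_n → 1 a.e., and ∫ |dφ_n|²_{g*} dμ_g → 0. -/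
/-!
Truncate `ψ n` to `[0, 1]`. Truncation is `1`-Lipschitz and fixes `0`, so the truncated functions
are still Lipschitz with compact support and their energy density is pointwise no larger. Since
`ψ n → 1` in `L²`, it converges in measure, hence almost everywhere along a subsequence, and this
survives the continuous truncation because it fixes `1`.
-/

open MeasureTheory ENNReal Filter

theorem MeasureTheory.tendstoInMeasure_of_tendsto_lintegral_enorm_rpow {α ι E : Type*}
    [MeasurableSpace α] {μ : Measure α} [NormedAddCommGroup E] {l : Filter ι}
    {f : ι → α → E} {g : α → E} {p : ℝ} (hp : 0 < p)
    (hf : ∀ i, AEStronglyMeasurable (f i) μ) (hg : AEStronglyMeasurable g μ)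
    (hfg : Tendsto (fun i => ∫⁻ x, ‖f i x - g x‖ₑ ^ p ∂μ) l (nhds 0)) :
    TendstoInMeasure μ f l g := by
  refine tendstoInMeasure_of_tendsto_eLpNorm (p := .ofReal p) (by simpa using hp) hf hg ?_
  have hroot := hfg.ennrpow_const (1 / p)
  rw [ENNReal.zero_rpow_of_pos (by positivity)] at hroot
  simpa [eLpNorm_eq_lintegral_rpow_enorm_toReal (by simpa using hp) ofReal_ne_top, hp.le] using hroot

noncomputable def unitClamp (t : ℝ) : ℝ := Set.projIcc 0 1 zero_le_one t

theorem unitClamp_mem_Icc (t : ℝ) : unitClamp t ∈ Set.Icc 0 1 := (Set.projIcc 0 1 _ t).2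

theorem unitClamp_zero : unitClamp 0 = 0 := by simp [unitClamp]

theorem unitClamp_one : unitClamp 1 = 1 := by simp [unitClamp]

theorem lipschitzWith_unitClamp : LipschitzWith 1 unitClamp := by
  have h := (LipschitzWith.subtype_val _).comp (LipschitzWith.projIcc (zero_le_one' ℝ))
  rwa [mul_one] at h

theorem stmt15_general {M : Type*} [MetricSpace M] [MeasurableSpace M] [BorelSpace M]
    (μ : Measure M)
    (D : (M → ℝ) → M → ℝ)
    (hDnn : ∀ (f : M → ℝ) (x : M), 0 ≤ D f x)
    (hDcontract : ∀ (f : M → ℝ) (φ : ℝ → ℝ), LipschitzWith 1 φ →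
      ∀ x : M, D (φ ∘ f) x ≤ D f x)
    (ψ : ℕ → M → ℝ)
    (hψlip : ∀ n, ∃ L, LipschitzWith L (ψ n))
    (hψsupp : ∀ n, HasCompactSupport (ψ n))
    (hψL2 : Tendsto (fun n => ∫⁻ x, ENNReal.ofReal (|ψ n x - 1| ^ (2 : ℝ)) ∂μ)
      atTop (nhds 0))
    (hψD : Tendsto (fun n => ∫⁻ x, ENNReal.ofReal (D (ψ n) x ^ (2 : ℝ)) ∂μ)
      atTop (nhds 0)) :
    ∃ φ : ℕ → M → ℝ,
      (∀ n, (∃ L, LipschitzWith L (φ n)) ∧ HasCompactSupport (φ n) ∧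
        ∀ x, 0 ≤ φ n x ∧ φ n x ≤ 1) ∧
      (∀ᵐ x ∂μ, Tendsto (fun n => φ n x) atTop (nhds 1)) ∧
      Tendsto (fun n => ∫⁻ x, ENNReal.ofReal (D (φ n) x ^ (2 : ℝ)) ∂μ)
        atTop (nhds 0) := by
  have hψ_inMeasure : TendstoInMeasure μ ψ atTop (fun _ => 1) := by
    refine tendstoInMeasure_of_tendsto_lintegral_enorm_rpow two_pos
      (fun n => (hψlip n).choose_spec.continuous.aestronglyMeasurable)
      aestronglyMeasurable_const ?_
    simpa only [Real.enorm_eq_ofReal_abs, ofReal_rpow_of_nonneg (abs_nonneg _) zero_le_two]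
      using hψL2
  obtain ⟨s, hs, hψ_ae⟩ := hψ_inMeasure.exists_seq_tendsto_ae
  refine ⟨fun n => unitClamp ∘ ψ (s n), fun n => ⟨?_, ?_, fun x => unitClamp_mem_Icc _⟩, ?_, ?_⟩
  · obtain ⟨L, hL⟩ := hψlip (s n)
    exact ⟨1 * L, lipschitzWith_unitClamp.comp hL⟩
  · exact (hψsupp (s n)).comp_left unitClamp_zero
  · filter_upwards [hψ_ae] with x hx
    simpa [unitClamp_one, Function.comp_def] using
      (lipschitzWith_unitClamp.continuous.tendsto 1).comp hx
  · have henergy_le : ∀ n, ∫⁻ x, ENNReal.ofReal (D (unitClamp ∘ ψ (s n)) x ^ (2 : ℝ)) ∂μ ≤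
        ∫⁻ x, ENNReal.ofReal (D (ψ (s n)) x ^ (2 : ℝ)) ∂μ := fun n =>
      lintegral_mono fun x => ofReal_le_ofReal <| Real.rpow_le_rpow (hDnn _ x)
        (hDcontract _ _ lipschitzWith_unitClamp x) zero_le_two
    exact tendsto_of_tendsto_of_tendsto_of_le_of_le tendsto_const_nhds
      (hψD.comp hs.tendsto_atTop) (fun _ => zero_le) henergy_le

/-- If `μ_g(M) < ∞` and the constant function `1` lies in `W^{1,2}_0(M,g)`
(i.e. it is approximated in the `W^{1,2}`-norm by compactly supported
functions), then `(M,g)` is `2`-parabolic:  there is a sequence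
`φ_n ∈ Lip_c(M)` with `0 ≤ φ_n ≤ 1`, `φ_n → 1` a.e. and
`∫ |dφ_n|² dμ → 0`.  The Riemannian energy density `|d·|_{g*}` is abstracted
as an operator `D` which is nonnegative and contracts under postcomposition
with `1`-Lipschitz functions. -/
theorem stmt15 {M : Type*} [MetricSpace M] [MeasurableSpace M] [BorelSpace M]
    (μ : Measure M) [IsFiniteMeasure μ]
    (D : (M → ℝ) → M → ℝ)
    (hDnn : ∀ (f : M → ℝ) (x : M), 0 ≤ D f x)
    (hDcontract : ∀ (f : M → ℝ) (φ : ℝ → ℝ), LipschitzWith 1 φ →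
      ∀ x : M, D (φ ∘ f) x ≤ D f x)
    (ψ : ℕ → M → ℝ)
    (hψlip : ∀ n, ∃ L, LipschitzWith L (ψ n))
    (hψsupp : ∀ n, HasCompactSupport (ψ n))
    (hψL2 : Tendsto (fun n => ∫⁻ x, ENNReal.ofReal (|ψ n x - 1| ^ (2 : ℝ)) ∂μ)
      atTop (nhds 0))
    (hψD : Tendsto (fun n => ∫⁻ x, ENNReal.ofReal (D (ψ n) x ^ (2 : ℝ)) ∂μ)
      atTop (nhds 0)) :
    ∃ φ : ℕ → M → ℝ,
      (∀ n, (∃ L, LipschitzWith L (φ n)) ∧ HasCompactSupport (φ n) ∧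
        ∀ x, 0 ≤ φ n x ∧ φ n x ≤ 1) ∧
      (∀ᵐ x ∂μ, Tendsto (fun n => φ n x) atTop (nhds 1)) ∧
      Tendsto (fun n => ∫⁻ x, ENNReal.ofReal (D (φ n) x ^ (2 : ℝ)) ∂μ)
        atTop (nhds 0) :=
  stmt15_general μ D hDnn hDcontract ψ hψlip hψsupp hψL2 hψD
end
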